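/- arXiv:2412.20934 — 10 statements merged into one kernel-verified Lean document; each statement's English description precedes it below -/
import Mathlib

section
/- For every variance function σ²(x)/2 with average σ̂²/2, the variational first eigenvalue is bounded by the ratio of the average variance to the variance of the stationary distribution: the infimum, over all continuously differentiable Q : (x₁, x₂) → ℝ satisfying ∫_{x₁}^{x₂} π(x) Q(x) dx = 0 and ∫_{x₁}^{x₂} π(x) Q(x)² dx = 1, of ∫_{x₁}^{x₂} (σ²(x)/2) π(x) (Q′(x))² dx is at most σ̂²/(2(m₂ − m₁²)). -/
open MeasureTheory Set Filter

/-! The Rayleigh quotient is bounded by its value at the standardized linear test function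
`Q x = (x - m₁) / √(m₂ - m₁²)`: it has mean zero and second moment one under `π`, and its
constant derivative turns the quotient into `σ̂²/2` divided by the variance. -/

section Moments

variable {μ : Measure ℝ} {ρ : ℝ → ℝ} {m₁ m₂ : ℝ}

theorem integral_mul_sub_mean (hρ : Integrable ρ μ) (h₁ : Integrable (fun x => x * ρ x) μ)
    (hnorm : ∫ x, ρ x ∂μ = 1) (hm₁ : ∫ x, x * ρ x ∂μ = m₁) :
    ∫ x, ρ x * (x - m₁) ∂μ = 0 := by
  have heq : (fun x => ρ x * (x - m₁)) = fun x => x * ρ x - m₁ * ρ x := by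
    funext x; ring
  rw [heq, integral_sub h₁ (hρ.const_mul _), integral_const_mul, hm₁, hnorm]
  ring

theorem integral_mul_sub_mean_sq (hρ : Integrable ρ μ) (h₁ : Integrable (fun x => x * ρ x) μ)
    (h₂ : Integrable (fun x => x ^ 2 * ρ x) μ) (hnorm : ∫ x, ρ x ∂μ = 1)
    (hm₁ : ∫ x, x * ρ x ∂μ = m₁) (hm₂ : ∫ x, x ^ 2 * ρ x ∂μ = m₂) :
    ∫ x, ρ x * (x - m₁) ^ 2 ∂μ = m₂ - m₁ ^ 2 := by
  have heq : (fun x => ρ x * (x - m₁) ^ 2)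
      = fun x => (x ^ 2 * ρ x - 2 * m₁ * (x * ρ x)) + m₁ ^ 2 * ρ x := by
    funext x; ring
  rw [heq, integral_add (f := fun x => x ^ 2 * ρ x - 2 * m₁ * (x * ρ x))
    (h₂.sub (h₁.const_mul _)) (hρ.const_mul _), integral_sub h₂ (h₁.const_mul _), integral_const_mul, integral_const_mul, hm₁, hm₂, hnorm]
  ring

end Moments

theorem statement1_general
    (I : Set ℝ)
    (ρ : ℝ → ℝ)
    (hρpos : ∀ x ∈ I, 0 < ρ x)
    (hρzero : ∀ x ∉ I, ρ x = 0)
    (hρint : Integrable ρ)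
    (hρnorm : (∫ x, ρ x) = 1)
    (hint1 : Integrable fun x => x * ρ x)
    (hint2 : Integrable fun x => x ^ 2 * ρ x)
    (m₁ m₂ : ℝ)
    (hm₁ : m₁ = ∫ x, x * ρ x)
    (hm₂ : m₂ = ∫ x, x ^ 2 * ρ x)
    (hvar : 0 < m₂ - m₁ ^ 2)
    -- the variance function σ²(x)/2, nonnegative and measurable on (x₁, x₂)
    (V : ℝ → ℝ)
    (hVnonneg : ∀ x ∈ I, 0 ≤ V x)
    -- its average σ̂²/2
    (avg : ℝ)
    (havg : (∫ x, V x * ρ x) = avg) :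
    sInf {r : ℝ |
        ∃ Q Q' : ℝ → ℝ,
          (∀ x ∈ I, HasDerivAt Q (Q' x) x) ∧
          ContinuousOn Q' I ∧
          (∫ x, ρ x * Q x) = 0 ∧
          (∫ x, ρ x * Q x ^ 2) = 1 ∧
          r = ∫ x, V x * ρ x * Q' x ^ 2}
      ≤ avg / (m₂ - m₁ ^ 2) := by
  set s := √(m₂ - m₁ ^ 2)
  have hs2 : s ^ 2 = m₂ - m₁ ^ 2 := Real.sq_sqrt hvar.le
  have hVρ : ∀ x, 0 ≤ V x * ρ x := fun x => by
    by_cases hxI : x ∈ I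
    · exact mul_nonneg (hVnonneg x hxI) (hρpos x hxI).le
    · simp [hρzero x hxI]
  refine csInf_le ⟨0, ?_⟩
    ⟨fun x => (x - m₁) / s, fun _ => 1 / s, ?_, continuousOn_const, ?_, ?_, ?_⟩
  · rintro r ⟨Q, Q', -, -, -, -, rfl⟩
    exact integral_nonneg fun x => mul_nonneg (hVρ x) (sq_nonneg _)
  · exact fun x _ => ((hasDerivAt_id x).sub_const m₁).div_const s
  · simp_rw [mul_div_assoc']
    rw [integral_div, integral_mul_sub_mean hρint hint1 hρnorm hm₁.symm, zero_div]
  · simp_rw [div_pow, mul_div_assoc']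
    rw [integral_div, integral_mul_sub_mean_sq hρint hint1 hint2 hρnorm hm₁.symm hm₂.symm, hs2,
      div_self hvar.ne']
  · simp_rw [div_pow, one_pow, mul_one_div]
    rw [integral_div, havg, hs2]

/-- For every variance function `V = σ²/2` with average `avg = σ̂²/2`, the
variational first eigenvalue — the infimum of the Rayleigh quotient
`∫ (σ²/2) π (Q')²` over continuously differentiable `Q` on `(x₁, x₂)` with
`∫ π Q = 0` and `∫ π Q² = 1` — is at most `σ̂²/(2(m₂ - m₁²)) = avg/(m₂ - m₁²)`. -/
theorem statement1
    (x₁ x₂ : EReal) (hx : x₁ < x₂)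
    (I : Set ℝ) (hI : I = {x : ℝ | x₁ < (x : EReal) ∧ (x : EReal) < x₂})
    (ρ : ℝ → ℝ)
    (hρcont : ContinuousOn ρ I)
    (hρpos : ∀ x ∈ I, 0 < ρ x)
    (hρzero : ∀ x ∉ I, ρ x = 0)
    (hρint : Integrable ρ)
    (hρnorm : (∫ x, ρ x) = 1)
    (hint1 : Integrable fun x => x * ρ x)
    (hint2 : Integrable fun x => x ^ 2 * ρ x)
    (m₁ m₂ : ℝ)
    (hm₁ : m₁ = ∫ x, x * ρ x)
    (hm₂ : m₂ = ∫ x, x ^ 2 * ρ x)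
    (hvar : 0 < m₂ - m₁ ^ 2)
    -- the variance function σ²(x)/2, nonnegative and measurable on (x₁, x₂)
    (V : ℝ → ℝ)
    (hVmeas : Measurable V)
    (hVnonneg : ∀ x ∈ I, 0 ≤ V x)
    (hVint : Integrable fun x => V x * ρ x)
    -- its average σ̂²/2
    (avg : ℝ) (havgpos : 0 < avg)
    (havg : (∫ x, V x * ρ x) = avg) :
    sInf {r : ℝ |
        ∃ Q Q' : ℝ → ℝ,
          (∀ x ∈ I, HasDerivAt Q (Q' x) x) ∧
          ContinuousOn Q' I ∧
          (∫ x, ρ x * Q x) = 0 ∧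
          (∫ x, ρ x * Q x ^ 2) = 1 ∧
          r = ∫ x, V x * ρ x * Q' x ^ 2}
      ≤ avg / (m₂ - m₁ ^ 2) :=
  statement1_general I ρ hρpos hρzero hρint hρnorm hint1 hint2 m₁ m₂ hm₁ hm₂ hvar V hVnonneg avg
    havg
end

section
/- Let λ₁ = σ̂²/(2(m₂ − m₁²)), S(x) = λ₁ ∫_{x₁}^{x} (m₁ − z) π(z) dz, and φ₁(x) = (x − m₁)/√(m₂ − m₁²). Then the function x ↦ S(x) φ₁′(x) is differentiable on (x₁, x₂) and φ₁ solves the Sturm–Liouville eigenvalue equation associated with the optimal diffusion: (d/dx)[S(x) φ₁′(x)] + λ₁ π(x) φ₁(x) = 0 for every x ∈ (x₁, x₂). -/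
open MeasureTheory Set Filter

/-! By the fundamental theorem of calculus, `S' = λ₁ (m₁ - x) π(x)` wherever `π` is
continuous, while `φ₁'` is the constant `1 / √(m₂ - m₁²)`; hence `(S φ₁')' = -λ₁ π φ₁`. -/

theorem hasDerivAt_integral_Iio {E : Type*} [NormedAddCommGroup E] [NormedSpace ℝ E]
    [CompleteSpace E] {f : ℝ → E} {x : ℝ} (hf : Integrable f) (hfx : ContinuousAt f x) :
    HasDerivAt (fun y => ∫ z in Iio y, f z) (f x) x := by
  have hsplit :
      (fun y => ∫ z in Iio y, f z) = fun y => (∫ z in Iic x, f z) + ∫ z in x..y, f z := by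
    funext y
    rw [← integral_Iic_eq_integral_Iio,
      ← intervalIntegral.integral_Iic_sub_Iic hf.integrableOn hf.integrableOn]
    abel
  rw [hsplit]
  exact (intervalIntegral.integral_hasDerivAt_right hf.intervalIntegrable
    hf.aestronglyMeasurable.stronglyMeasurableAtFilter hfx).const_add _

theorem statement3_general
    (x₁ x₂ : EReal)
    (I : Set ℝ) (hI : I = {x : ℝ | x₁ < (x : EReal) ∧ (x : EReal) < x₂})
    (ρ : ℝ → ℝ)
    (hρcont : ContinuousOn ρ I)
    (hρint : Integrable ρ)
    (hint1 : Integrable fun x => x * ρ x)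
    (m₁ m₂ : ℝ)
    (lam : ℝ)
    (S : ℝ → ℝ) (hS : ∀ x, S x = lam * ∫ z in Set.Iio x, (m₁ - z) * ρ z)
    (φ₁ : ℝ → ℝ)
    (hφ₁ : φ₁ = fun x => (x - m₁) / Real.sqrt (m₂ - m₁ ^ 2)) :
    ∀ x ∈ I, HasDerivAt (fun y => S y * deriv φ₁ y) (-(lam * ρ x * φ₁ x)) x := by
  intro x hxI
  have hIopen : IsOpen I := hI ▸ isOpen_Ioo.preimage continuous_coe_real_ereal
  have hflux : Integrable fun z => (m₁ - z) * ρ z := by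
    simpa only [sub_mul] using (hρint.const_mul m₁).sub' hint1
  have hfluxx : ContinuousAt (fun z => (m₁ - z) * ρ z) x :=
    (continuousAt_const.sub continuousAt_id).mul (hρcont.continuousAt (hIopen.mem_nhds hxI))
  have hSderiv : HasDerivAt S (lam * ((m₁ - x) * ρ x)) x := by
    rw [funext hS]
    exact (hasDerivAt_integral_Iio hflux hfluxx).const_mul lam
  have hφ₁deriv : deriv φ₁ = fun _ => (Real.sqrt (m₂ - m₁ ^ 2))⁻¹ := by
    funext y
    rw [hφ₁]
    simpa only [div_eq_mul_inv, one_mul] using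
      (((hasDerivAt_id' y).sub_const m₁).div_const (Real.sqrt (m₂ - m₁ ^ 2))).deriv
  rw [hφ₁deriv]
  refine (hSderiv.mul_const _).congr_deriv ?_
  rw [hφ₁]
  ring

/-- With `λ₁ = σ̂²/(2(m₂ - m₁²))`, `S(x) = λ₁ ∫_{x₁}^{x} (m₁ - z) π(z) dz`
(the lower limit `x₁` is expressed via `Iio x` since `π` vanishes below `x₁`) and
`φ₁(x) = (x - m₁)/√(m₂ - m₁²)`, the function `x ↦ S(x) φ₁'(x)` is differentiable on
`(x₁, x₂)` and `φ₁` solves the Sturm–Liouville equation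
`(d/dx)[S φ₁'] + λ₁ π φ₁ = 0` there. -/
theorem statement3
    (x₁ x₂ : EReal) (hx : x₁ < x₂)
    (I : Set ℝ) (hI : I = {x : ℝ | x₁ < (x : EReal) ∧ (x : EReal) < x₂})
    (ρ : ℝ → ℝ)
    (hρcont : ContinuousOn ρ I)
    (hρpos : ∀ x ∈ I, 0 < ρ x)
    (hρzero : ∀ x ∉ I, ρ x = 0)
    (hρint : Integrable ρ)
    (hρnorm : (∫ x, ρ x) = 1)
    (hint1 : Integrable fun x => x * ρ x)
    (hint2 : Integrable fun x => x ^ 2 * ρ x)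
    (m₁ m₂ : ℝ)
    (hm₁ : m₁ = ∫ x, x * ρ x)
    (hm₂ : m₂ = ∫ x, x ^ 2 * ρ x)
    (hvar : 0 < m₂ - m₁ ^ 2)
    (avg : ℝ) (havgpos : 0 < avg)
    (lam : ℝ) (hlam : lam = avg / (m₂ - m₁ ^ 2))
    (S : ℝ → ℝ) (hS : ∀ x, S x = lam * ∫ z in Set.Iio x, (m₁ - z) * ρ z)
    (φ₁ : ℝ → ℝ)
    (hφ₁ : φ₁ = fun x => (x - m₁) / Real.sqrt (m₂ - m₁ ^ 2)) :
    ∀ x ∈ I, HasDerivAt (fun y => S y * deriv φ₁ y) (-(lam * ρ x * φ₁ x)) x :=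
  statement3_general x₁ x₂ I hI ρ hρcont hρint hint1 m₁ m₂ lam S hS φ₁ hφ₁
end

section
/- For every x strictly between x₁ and x₂, ∫_{x₁}^{x} (m₁ − z) π(z) dz > 0. Consequently, the optimal variance function σ²(x)/2 = (λ₁/π(x)) ∫_{x₁}^{x} (m₁ − z) π(z) dz, with λ₁ = σ̂²/(2(m₂ − m₁²)) > 0, is a strictly positive function on (x₁, x₂). -/
open MeasureTheory Set Filter

/-- For every `x` strictly between `x₁` and `x₂`,
`∫_{x₁}^{x} (m₁ - z) π(z) dz > 0` (the lower limit `x₁` is expressed via `Iio x` since `π`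
vanishes below `x₁`). Consequently the optimal variance function
`σ²(x)/2 = (λ₁/π(x)) ∫_{x₁}^{x} (m₁ - z) π(z) dz`, with `λ₁ = σ̂²/(2(m₂ - m₁²)) > 0`,
is strictly positive on `(x₁, x₂)`. -/
theorem statement8
    (x₁ x₂ : EReal) (hx : x₁ < x₂)
    (I : Set ℝ) (hI : I = {x : ℝ | x₁ < (x : EReal) ∧ (x : EReal) < x₂})
    (ρ : ℝ → ℝ)
    (hρcont : ContinuousOn ρ I)
    (hρpos : ∀ x ∈ I, 0 < ρ x)
    (hρzero : ∀ x ∉ I, ρ x = 0)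
    (hρint : Integrable ρ)
    (hρnorm : (∫ x, ρ x) = 1)
    (hint1 : Integrable fun x => x * ρ x)
    (hint2 : Integrable fun x => x ^ 2 * ρ x)
    (m₁ m₂ : ℝ)
    (hm₁ : m₁ = ∫ x, x * ρ x)
    (hm₂ : m₂ = ∫ x, x ^ 2 * ρ x)
    (hvar : 0 < m₂ - m₁ ^ 2)
    (avg : ℝ) (havgpos : 0 < avg)
    (lam : ℝ) (hlam : lam = avg / (m₂ - m₁ ^ 2))
    (V : ℝ → ℝ)
    (hV : ∀ x, V x = lam / ρ x * ∫ z in Set.Iio x, (m₁ - z) * ρ z) :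
    ∀ x ∈ I, (0 < ∫ z in Set.Iio x, (m₁ - z) * ρ z) ∧ 0 < V x := by
  intro x hxI
  have hxI' : x₁ < (x : EReal) ∧ (x : EReal) < x₂ := by rw [hI] at hxI; exact hxI
  obtain ⟨hx1, hx2⟩ := hxI'
  set g : ℝ → ℝ := fun z => (m₁ - z) * ρ z with hg
  have hgint : Integrable g := by
    have h : g = fun z => m₁ * ρ z - z * ρ z := by funext z; simp [hg]; ring
    rw [h]; exact (hρint.const_mul m₁).sub hint1
  have hgtot : (∫ z, g z) = 0 := by
    have h : (∫ z, g z) = (∫ z, m₁ * ρ z) - ∫ z, z * ρ z := by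
      rw [← integral_sub (hρint.const_mul m₁) hint1]
      congr 1; funext z; simp [hg]; ring
    rw [h, integral_const_mul, hρnorm, ← hm₁]; ring
  have hρnonneg : ∀ z, 0 ≤ ρ z := fun z => by
    by_cases h : z ∈ I
    · exact (hρpos z h).le
    · rw [hρzero z h]
  have key : 0 < ∫ z in Set.Iio x, g z := by
    rcases le_total x m₁ with hxm | hxm
    · obtain ⟨a, ha1, ha2⟩ := EReal.lt_iff_exists_real_btwn.mp hx1
      have hax : a < x := by exact_mod_cast ha2
      have hsub : Set.Ioo a x ⊆ I := by
        intro z hz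
        rw [hI]
        refine ⟨lt_trans ha1 ?_, lt_trans ?_ hx2⟩
        · exact_mod_cast hz.1
        · exact_mod_cast hz.2
      have hpos : ∀ z ∈ Set.Ioo a x, 0 < g z := fun z hz =>
        mul_pos (by simp; linarith [hz.2]) (hρpos z (hsub hz))
      have h1 : 0 < ∫ z in a..x, g z :=
        intervalIntegral.intervalIntegral_pos_of_pos_on hgint.intervalIntegrable hpos hax
      have h2 : (∫ z in a..x, g z) = ∫ z in Set.Ioo a x, g z := by
        rw [intervalIntegral.integral_of_le hax.le, integral_Ioc_eq_integral_Ioo]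
      have h3 : (∫ z in Set.Ioo a x, g z) ≤ ∫ z in Set.Iio x, g z := by
        apply setIntegral_mono_set hgint.integrableOn
        · exact MeasureTheory.ae_restrict_of_forall_mem measurableSet_Iio
            (fun z hz => mul_nonneg (by simp at hz ⊢; linarith) (hρnonneg z))
        · exact (Set.Ioo_subset_Iio_self).eventuallyLE
      linarith [h2 ▸ h1]
    · obtain ⟨b, hb1, hb2⟩ := EReal.lt_iff_exists_real_btwn.mp hx2
      have hxb : x < b := by exact_mod_cast hb1
      set h : ℝ → ℝ := fun z => (z - m₁) * ρ z with hh
      have hhint : Integrable h := by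
        have he : h = fun z => z * ρ z - m₁ * ρ z := by funext z; simp [hh]; ring
        rw [he]; exact hint1.sub (hρint.const_mul m₁)
      have hsub : Set.Ioo x b ⊆ I := by
        intro z hz
        rw [hI]
        refine ⟨lt_trans hx1 ?_, lt_trans ?_ hb2⟩
        · exact_mod_cast hz.1
        · exact_mod_cast hz.2
      have hpos : ∀ z ∈ Set.Ioo x b, 0 < h z := fun z hz =>
        mul_pos (by simp [hh]; linarith [hz.1]) (hρpos z (hsub hz))
      have h1 : 0 < ∫ z in x..b, h z :=
        intervalIntegral.intervalIntegral_pos_of_pos_on hhint.intervalIntegrable hpos hxb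
      have h2 : (∫ z in x..b, h z) = ∫ z in Set.Ioo x b, h z := by
        rw [intervalIntegral.integral_of_le hxb.le, integral_Ioc_eq_integral_Ioo]
      have h3 : (∫ z in Set.Ioo x b, h z) ≤ ∫ z in Set.Ici x, h z := by
        apply setIntegral_mono_set hhint.integrableOn
        · exact MeasureTheory.ae_restrict_of_forall_mem measurableSet_Ici
            (fun z hz => mul_nonneg (by simp at hz ⊢; linarith) (hρnonneg z))
        · exact HasSubset.Subset.eventuallyLE (fun z hz => le_of_lt hz.1)
      have hsplit : (∫ z in Set.Iio x, g z) + (∫ z in Set.Ici x, g z) = ∫ z, g z :=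
        intervalIntegral.integral_Iio_add_Ici hgint.integrableOn hgint.integrableOn
      have hgh : (∫ z in Set.Ici x, g z) = - ∫ z in Set.Ici x, h z := by
        rw [← integral_neg]
        congr 1; funext z; simp [hg, hh]; ring
      rw [hgtot, hgh] at hsplit
      linarith [h2 ▸ h1]
  refine ⟨key, ?_⟩
  rw [hV]
  have hlampos : 0 < lam := by rw [hlam]; exact div_pos havgpos hvar
  exact mul_pos (div_pos hlampos (hρpos x hxI)) key
end

section
/- Assume the function x ↦ ∫_{x₁}^{x} (m₁ − z) π(z) dz is integrable on (x₁, x₂). Then ∫_{x₁}^{x₂} ( ∫_{x₁}^{x} (m₁ − z) π(z) dz ) dx = m₂ − m₁². Consequently, the π-weighted average of the optimal variance function σ²(x)/2 = (λ₁/π(x)) ∫_{x₁}^{x} (m₁ − z) π(z) dz, with λ₁ = σ̂²/(2(m₂ − m₁²)), equals σ̂²/2: ∫_{x₁}^{x₂} (σ²(x)/2) π(x) dx = σ̂²/2. -/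
/-!
Put `f z = (m₁ - z) π(z)`, so that `∫ f = 0` and `∫ z f(z) dz = m₁² - m₂`. Since `∫ f = 0`, the
tail integral `∫_{z<x} f` equals `∫ k(x,z) f(z) dz` for the kernel `k(x,z) = 1_{z<x} - 1_{0<x}`.
For fixed `z` this kernel is the signed indicator of the interval between `z` and `0`, so
`∫ k(x,z) dx = -z` and `∫ |k(x,z)| dx = |z|`; hence `k(x,z) f(z)` is integrable on the plane and
Fubini gives `∫ S = -∫ z f(z) dz = m₂ - m₁²`. Outside `(x₁, x₂)` the function `S` vanishes, so
`(σ²/2) π = λ₁ S` everywhere and the weighted average is `λ₁ (m₂ - m₁²) = σ̂²/2`.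
-/

open MeasureTheory Set Filter

noncomputable def tailKernel (x z : ℝ) : ℝ := (Iio x).indicator 1 z - (Ioi 0).indicator 1 x

lemma tailKernel_eq_indicator_sub_indicator (x z : ℝ) :
    tailKernel x z = (Ioc z 0).indicator 1 x - (Ioc 0 z).indicator 1 x := by
  simp only [tailKernel, indicator, mem_Iio, mem_Ioi, mem_Ioc, Pi.one_apply]
  split_ifs <;> grind

lemma abs_tailKernel (x z : ℝ) : |tailKernel x z| = (uIoc z 0).indicator 1 x := by
  simp only [tailKernel, indicator, mem_Iio, mem_Ioi, mem_uIoc, Pi.one_apply]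
  split_ifs <;> grind

lemma measurable_tailKernel : Measurable (Function.uncurry tailKernel) :=
  (measurable_const.indicator (measurableSet_lt measurable_snd measurable_fst)).sub
    (measurable_const.indicator (measurableSet_lt measurable_const measurable_fst))

lemma integrable_indicator_one_Ioc (a b : ℝ) : Integrable ((Ioc a b).indicator (1 : ℝ → ℝ)) :=
  (integrable_indicator_iff measurableSet_Ioc).2 (integrableOn_const measure_Ioc_lt_top.ne)

lemma integrable_tailKernel (z : ℝ) : Integrable fun x => tailKernel x z := by
  simp_rw [tailKernel_eq_indicator_sub_indicator]
  exact (integrable_indicator_one_Ioc z 0).sub (integrable_indicator_one_Ioc 0 z)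

lemma integral_tailKernel (z : ℝ) : ∫ x, tailKernel x z = -z := by
  simp_rw [tailKernel_eq_indicator_sub_indicator]
  rw [integral_sub (integrable_indicator_one_Ioc z 0) (integrable_indicator_one_Ioc 0 z),
    integral_indicator_one measurableSet_Ioc, integral_indicator_one measurableSet_Ioc,
    Real.volume_real_Ioc, Real.volume_real_Ioc]
  rcases le_total z 0 with h | h <;> simp [h]

lemma integral_abs_tailKernel (z : ℝ) : ∫ x, |tailKernel x z| = |z| := by
  simp_rw [abs_tailKernel]
  rw [integral_indicator_one measurableSet_uIoc, measureReal_def, Real.volume_uIoc]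
  simp

section

variable {E : Type*} [NormedAddCommGroup E] [NormedSpace ℝ E] {f : ℝ → E}

lemma integrable_tailKernel_smul (hf : AEStronglyMeasurable f)
    (hzf : Integrable fun z => z • f z) :
    Integrable (fun p : ℝ × ℝ => tailKernel p.1 p.2 • f p.2) (volume.prod volume) := by
  have hmeas : AEStronglyMeasurable (fun p : ℝ × ℝ => tailKernel p.1 p.2 • f p.2)
      (volume.prod volume) :=
    measurable_tailKernel.aestronglyMeasurable.smul hf.comp_snd
  refine (integrable_prod_iff' hmeas).2
    ⟨Eventually.of_forall fun z => (integrable_tailKernel z).smul_const (f z), ?_⟩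
  simp_rw [norm_smul, Real.norm_eq_abs, integral_mul_const, integral_abs_tailKernel]
  simpa only [norm_smul, Real.norm_eq_abs] using hzf.norm

lemma integral_tailKernel_smul [CompleteSpace E] (hf : Integrable f) (hf0 : ∫ z, f z = 0)
    (x : ℝ) :
    ∫ z, tailKernel x z • f z = ∫ z in Iio x, f z := by
  have hind (z : ℝ) : (Iio x).indicator (1 : ℝ → ℝ) z • f z = (Iio x).indicator f z := by
    by_cases hz : z ∈ Iio x <;> simp [hz]
  simp_rw [tailKernel, sub_smul, hind]
  rw [integral_sub (hf.indicator measurableSet_Iio) (hf.smul ((Ioi 0).indicator 1 x) :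
    Integrable fun z => _ • f z), integral_smul, hf0, smul_zero,
    sub_zero, integral_indicator measurableSet_Iio]

theorem integral_setIntegral_Iio_eq_neg_integral_smul [CompleteSpace E] (hf : Integrable f)
    (hzf : Integrable fun z => z • f z) (hf0 : ∫ z, f z = 0) :
    ∫ x, ∫ z in Iio x, f z = -∫ z, z • f z := calc
  ∫ x, ∫ z in Iio x, f z = ∫ x, ∫ z, tailKernel x z • f z := by
    simp_rw [integral_tailKernel_smul hf hf0]
  _ = ∫ z, ∫ x, tailKernel x z • f z :=
    integral_integral_swap (integrable_tailKernel_smul hf.aestronglyMeasurable hzf)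
  _ = -∫ z, z • f z := by
    simp_rw [integral_smul_const, integral_tailKernel, neg_smul, integral_neg]

lemma setIntegral_Iio_eq_zero_of_notMem [CompleteSpace E] {I : Set ℝ} (hI : I.OrdConnected)
    (hf : Integrable f) (hf0 : ∫ z, f z = 0) (hfI : ∀ z ∉ I, f z = 0) {x : ℝ} (hx : x ∉ I) :
    ∫ z in Iio x, f z = 0 := by
  by_cases hleft : ∀ z ∈ Iio x, z ∉ I
  · exact setIntegral_eq_zero_of_forall_eq_zero fun z hz => hfI z (hleft z hz)
  push Not at hleft
  obtain ⟨a, hax, haI⟩ := hleft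
  have hright : ∀ z ∈ Ici x, f z = 0 := fun z hz =>
    hfI z fun hzI => hx (hI.out haI hzI ⟨le_of_lt hax, hz⟩)
  have hsplit := integral_add_compl (measurableSet_Iio (a := x)) hf
  rwa [compl_Iio, setIntegral_eq_zero_of_forall_eq_zero hright, add_zero, hf0] at hsplit

end

theorem statement9_general
    (x₁ x₂ : EReal)
    (I : Set ℝ) (hI : I = {x : ℝ | x₁ < (x : EReal) ∧ (x : EReal) < x₂})
    (ρ : ℝ → ℝ)
    (hρpos : ∀ x ∈ I, 0 < ρ x)
    (hρzero : ∀ x ∉ I, ρ x = 0)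
    (hρint : Integrable ρ)
    (hρnorm : (∫ x, ρ x) = 1)
    (hint1 : Integrable fun x => x * ρ x)
    (hint2 : Integrable fun x => x ^ 2 * ρ x)
    (m₁ m₂ : ℝ)
    (hm₁ : m₁ = ∫ x, x * ρ x)
    (hm₂ : m₂ = ∫ x, x ^ 2 * ρ x)
    (hvar : 0 < m₂ - m₁ ^ 2)
    (avg : ℝ)
    (lam : ℝ) (hlam : lam = avg / (m₂ - m₁ ^ 2))
    (S : ℝ → ℝ) (hS : ∀ x, S x = ∫ z in Set.Iio x, (m₁ - z) * ρ z)
    (V : ℝ → ℝ) (hV : ∀ x, V x = lam / ρ x * S x) :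
    (∫ x, S x) = m₂ - m₁ ^ 2 ∧ (∫ x, V x * ρ x) = avg := by
  set f : ℝ → ℝ := fun z => (m₁ - z) * ρ z
  have hf : Integrable f :=
    ((hρint.const_mul m₁).sub hint1).congr
      (Eventually.of_forall fun z => by simp only [f, Pi.sub_apply]; ring)
  have hzf : Integrable fun z => z • f z :=
    ((hint1.const_mul m₁).sub hint2).congr
      (Eventually.of_forall fun z => by simp only [f, Pi.sub_apply, smul_eq_mul]; ring)
  have hf0 : ∫ z, f z = 0 := by
    simp only [f, sub_mul]
    rw [integral_sub (hρint.const_mul m₁) hint1, integral_const_mul, hρnorm, ← hm₁, mul_one,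
      sub_self]
  have hzf_eq : ∫ z, z • f z = m₁ ^ 2 - m₂ := by
    rw [integral_congr_ae (g := fun z => m₁ * (z * ρ z) - z ^ 2 * ρ z)
      (Eventually.of_forall fun z => by simp only [f, smul_eq_mul]; ring),
      integral_sub (hint1.const_mul m₁) hint2, integral_const_mul, ← hm₁, ← hm₂, sq]
  have hS_eq : ∫ x, S x = m₂ - m₁ ^ 2 := by
    simp_rw [hS]
    rw [integral_setIntegral_Iio_eq_neg_integral_smul hf hzf hf0, hzf_eq, neg_sub]
  have hI_conn : I.OrdConnected :=
    hI ▸ ordConnected_Ioo.preimage_mono EReal.coe_strictMono.monotone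
  have hVρ (x : ℝ) : V x * ρ x = lam * S x := by
    rw [hV]
    by_cases hx : x ∈ I
    · field_simp [(hρpos x hx).ne']
    · rw [hρzero x hx, hS, setIntegral_Iio_eq_zero_of_notMem hI_conn hf hf0
        (fun z hz => by simp only [f, hρzero z hz, mul_zero]) hx]
      simp
  refine ⟨hS_eq, ?_⟩
  simp_rw [hVρ]
  rw [integral_const_mul, hS_eq, hlam, div_mul_cancel₀ _ hvar.ne']

/-- If `S(x) = ∫_{x₁}^{x} (m₁ - z) π(z) dz` is integrable on `(x₁, x₂)`
(the lower limit `x₁` is expressed via `Iio x` and integrals over `(x₁, x₂)` over all of `ℝ`,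
since `π` vanishes outside `(x₁, x₂)` and consequently so does `S`), then
`∫_{x₁}^{x₂} S(x) dx = m₂ - m₁²`; consequently the `π`-weighted average of the optimal
variance function `σ²(x)/2 = (λ₁/π(x)) S(x)`, with `λ₁ = σ̂²/(2(m₂ - m₁²))`,
equals `σ̂²/2`. -/
theorem statement9
    (x₁ x₂ : EReal) (hx : x₁ < x₂)
    (I : Set ℝ) (hI : I = {x : ℝ | x₁ < (x : EReal) ∧ (x : EReal) < x₂})
    (ρ : ℝ → ℝ)
    (hρcont : ContinuousOn ρ I)
    (hρpos : ∀ x ∈ I, 0 < ρ x)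
    (hρzero : ∀ x ∉ I, ρ x = 0)
    (hρint : Integrable ρ)
    (hρnorm : (∫ x, ρ x) = 1)
    (hint1 : Integrable fun x => x * ρ x)
    (hint2 : Integrable fun x => x ^ 2 * ρ x)
    (m₁ m₂ : ℝ)
    (hm₁ : m₁ = ∫ x, x * ρ x)
    (hm₂ : m₂ = ∫ x, x ^ 2 * ρ x)
    (hvar : 0 < m₂ - m₁ ^ 2)
    (avg : ℝ) (havgpos : 0 < avg)
    (lam : ℝ) (hlam : lam = avg / (m₂ - m₁ ^ 2))
    (S : ℝ → ℝ) (hS : ∀ x, S x = ∫ z in Set.Iio x, (m₁ - z) * ρ z)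
    (hSint : Integrable S)
    (V : ℝ → ℝ) (hV : ∀ x, V x = lam / ρ x * S x) :
    (∫ x, S x) = m₂ - m₁ ^ 2 ∧ (∫ x, V x * ρ x) = avg :=
  statement9_general x₁ x₂ I hI ρ hρpos hρzero hρint hρnorm hint1 hint2 m₁ m₂ hm₁ hm₂ hvar avg lam
    hlam S hS V hV
end

section
/- Fix α, β > −1 and let π(x) = x^α (1 − x)^β / B(α+1, β+1) for x ∈ (0, 1) (the Beta density), and let the variance function be σ²(x)/2 = x(1 − x). Then the average variance is σ̂²/2 = ∫₀¹ x(1 − x) π(x) dx = (α+1)(β+1)/((α+β+2)(α+β+3)), the variance of π is m₂ − m₁² = (α+1)(β+1)/((α+β+2)²(α+β+3)), and hence the ratio σ̂²/(2(m₂ − m₁²)) = α + β + 2, which equals the smallest nonzero eigenvalue λ₁ = 1·(1 + α + β + 1) of the hypergeometric (Jacobi-type) diffusion; thus this Pearson diffusion attains the optimal convergence rate. -/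
/-!
Euler's Beta integral turns the moments `∫ xᵖ (1 - x)^q ρ` of the Beta density into ratios
`B(α + 1 + p, β + 1 + q) / B(α + 1, β + 1)`, and `Γ(s + 1) = s Γ(s)` makes each ratio needed here
(mean, second moment, average of `x (1 - x)`) a rational function of `α` and `β`; the three
identities are then algebra.
-/

open MeasureTheory Set ProbabilityTheory

namespace ProbabilityTheory

theorem integral_Ioo_rpow_mul_one_sub_rpow {a b : ℝ} (ha : 0 < a) (hb : 0 < b) :
    ∫ x in Ioo (0 : ℝ) 1, x ^ (a - 1) * (1 - x) ^ (b - 1) = beta a b := by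
  rw [beta_eq_betaIntegralReal a b ha hb, Complex.betaIntegral,
    intervalIntegral.integral_of_le zero_le_one, integral_Ioc_eq_integral_Ioo,
    ← Complex.ofReal_re (∫ x in Ioo (0 : ℝ) 1, _), ← integral_complex_ofReal]
  congr 1
  refine setIntegral_congr_fun measurableSet_Ioo fun x hx => ?_
  push_cast
  rw [Complex.ofReal_cpow hx.1.le, Complex.ofReal_cpow (sub_nonneg.2 hx.2.le)]
  push_cast
  ring

theorem beta_add_one_left {a b : ℝ} (ha : a ≠ 0) (hab : a + b ≠ 0) :
    beta (a + 1) b = a / (a + b) * beta a b := by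
  rw [beta, beta, add_right_comm, Real.Gamma_add_one ha, Real.Gamma_add_one hab]
  field_simp

theorem beta_comm (a b : ℝ) : beta a b = beta b a := by
  rw [beta, beta, mul_comm, add_comm]

theorem beta_add_one_right {a b : ℝ} (hb : b ≠ 0) (hab : a + b ≠ 0) :
    beta a (b + 1) = b / (a + b) * beta a b := by
  rw [beta_comm, beta_add_one_left hb (by rwa [add_comm]), add_comm b, beta_comm]

section BetaRatios

variable {a b : ℝ} (ha : 0 < a) (hb : 0 < b)
include ha hb

theorem beta_add_one_left_div : beta (a + 1) b / beta a b = a / (a + b) := by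
  rw [beta_add_one_left ha.ne' (by positivity), mul_div_cancel_right₀ _ (beta_pos ha hb).ne']

theorem beta_add_two_left_div :
    beta (a + 2) b / beta a b = a * (a + 1) / ((a + b) * (a + b + 1)) := by
  rw [show a + 2 = a + 1 + 1 by ring, beta_add_one_left (by positivity) (by positivity),
    beta_add_one_left ha.ne' (by positivity)]
  field_simp [(beta_pos ha hb).ne']
  ring

theorem beta_add_one_add_one_div :
    beta (a + 1) (b + 1) / beta a b = a * b / ((a + b) * (a + b + 1)) := by
  rw [beta_add_one_right hb.ne' (by positivity), beta_add_one_left ha.ne' (by positivity)]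
  field_simp [(beta_pos ha hb).ne']
  ring

end BetaRatios

section BetaDensity

variable {α β : ℝ} (hα : -1 < α) (hβ : -1 < β) {ρ : ℝ → ℝ}
  (hρ : ∀ x, ρ x = x ^ α * (1 - x) ^ β / beta (α + 1) (β + 1))
include hα hβ hρ

theorem setIntegral_pow_mul_one_sub_pow_mul_density (p q : ℕ) :
    ∫ x in Ioo (0 : ℝ) 1, x ^ p * (1 - x) ^ q * ρ x
      = beta (α + 1 + p) (β + 1 + q) / beta (α + 1) (β + 1) := by
  calc ∫ x in Ioo (0 : ℝ) 1, x ^ p * (1 - x) ^ q * ρ x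
      = ∫ x in Ioo (0 : ℝ) 1,
          x ^ (α + 1 + p - 1) * (1 - x) ^ (β + 1 + q - 1) / beta (α + 1) (β + 1) := by
        refine setIntegral_congr_fun measurableSet_Ioo fun x hx => ?_
        have hx' : 0 < 1 - x := sub_pos.2 hx.2
        rw [hρ, show α + 1 + p - 1 = α + p by ring, show β + 1 + q - 1 = β + q by ring,
          Real.rpow_add hx.1, Real.rpow_add hx', Real.rpow_natCast, Real.rpow_natCast]
        ring
    _ = _ := by
        rw [integral_div, integral_Ioo_rpow_mul_one_sub_rpow
          (by linarith [p.cast_nonneg (α := ℝ)]) (by linarith [q.cast_nonneg (α := ℝ)])]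

theorem setIntegral_mul_density :
    ∫ x in Ioo (0 : ℝ) 1, x * ρ x = (α + 1) / (α + β + 2) := by
  have h := setIntegral_pow_mul_one_sub_pow_mul_density hα hβ hρ 1 0
  simp only [pow_one, pow_zero, mul_one, Nat.cast_one, Nat.cast_zero, add_zero,
    beta_add_one_left_div (neg_lt_iff_pos_add.1 hα) (neg_lt_iff_pos_add.1 hβ)] at h
  rw [h]
  ring

theorem setIntegral_sq_mul_density :
    ∫ x in Ioo (0 : ℝ) 1, x ^ 2 * ρ x = (α + 1) * (α + 2) / ((α + β + 2) * (α + β + 3)) := by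
  have h := setIntegral_pow_mul_one_sub_pow_mul_density hα hβ hρ 2 0
  simp only [pow_zero, mul_one, Nat.cast_ofNat, Nat.cast_zero, add_zero,
    beta_add_two_left_div (neg_lt_iff_pos_add.1 hα) (neg_lt_iff_pos_add.1 hβ)] at h
  rw [h]
  ring

theorem setIntegral_mul_one_sub_mul_density :
    ∫ x in Ioo (0 : ℝ) 1, x * (1 - x) * ρ x
      = (α + 1) * (β + 1) / ((α + β + 2) * (α + β + 3)) := by
  have h := setIntegral_pow_mul_one_sub_pow_mul_density hα hβ hρ 1 1
  simp only [pow_one, Nat.cast_one,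
    beta_add_one_add_one_div (neg_lt_iff_pos_add.1 hα) (neg_lt_iff_pos_add.1 hβ)] at h
  rw [h]
  ring

end BetaDensity

end ProbabilityTheory

/-- For the Beta density `ρ(x) = xᵅ(1-x)^β / B(α+1, β+1)` on `(0,1)`
(`α, β > -1`) with variance function `σ²(x)/2 = x(1-x)`: the average variance is
`σ̂²/2 = (α+1)(β+1)/((α+β+2)(α+β+3))`, the variance of `ρ` is
`m₂ - m₁² = (α+1)(β+1)/((α+β+2)²(α+β+3))`, and the ratio `σ̂²/(2(m₂-m₁²))` equals
`α+β+2 = 1·(1+α+β+1)`, the smallest nonzero eigenvalue of the hypergeometric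
(Jacobi-type) diffusion, so this Pearson diffusion attains the optimal rate. -/
theorem statement11
    (α β : ℝ) (hα : -1 < α) (hβ : -1 < β)
    (B : ℝ → ℝ → ℝ)
    (hB : ∀ a b, B a b = Real.Gamma a * Real.Gamma b / Real.Gamma (a + b))
    (ρ : ℝ → ℝ)
    (hρ : ∀ x, ρ x = x ^ α * (1 - x) ^ β / B (α + 1) (β + 1)) :
    (∫ x in Set.Ioo (0 : ℝ) 1, x * (1 - x) * ρ x)
        = (α + 1) * (β + 1) / ((α + β + 2) * (α + β + 3)) ∧
    (∫ x in Set.Ioo (0 : ℝ) 1, x ^ 2 * ρ x) - (∫ x in Set.Ioo (0 : ℝ) 1, x * ρ x) ^ 2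
        = (α + 1) * (β + 1) / ((α + β + 2) ^ 2 * (α + β + 3)) ∧
    (∫ x in Set.Ioo (0 : ℝ) 1, x * (1 - x) * ρ x) /
        ((∫ x in Set.Ioo (0 : ℝ) 1, x ^ 2 * ρ x) - (∫ x in Set.Ioo (0 : ℝ) 1, x * ρ x) ^ 2)
        = 1 * (1 + α + β + 1) := by
  obtain rfl : B = beta := funext₂ hB
  have ha : 0 < α + 1 := by linarith
  have hb : 0 < β + 1 := by linarith
  have hs : 0 < α + β + 2 := by linarith
  have hs' : 0 < α + β + 3 := by linarith
  have hvar : (∫ x in Ioo (0 : ℝ) 1, x ^ 2 * ρ x) - (∫ x in Ioo (0 : ℝ) 1, x * ρ x) ^ 2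
      = (α + 1) * (β + 1) / ((α + β + 2) ^ 2 * (α + β + 3)) := by
    rw [setIntegral_sq_mul_density hα hβ hρ, setIntegral_mul_density hα hβ hρ]
    field_simp
    ring
  refine ⟨setIntegral_mul_one_sub_mul_density hα hβ hρ, hvar, ?_⟩
  rw [setIntegral_mul_one_sub_mul_density hα hβ hρ, hvar]
  field_simp
  ring
end

section
/- Fix α > −1 and let π(x) = x^α e^{−x} / Γ(α+1) for x ∈ (0, ∞) (the Gamma density), and let the variance function be σ²(x)/2 = x (the CIR process). Then the average variance is σ̂²/2 = ∫₀^∞ x π(x) dx = α + 1, the variance of π is m₂ − m₁² = α + 1, and hence the ratio σ̂²/(2(m₂ − m₁²)) = 1, which equals the smallest nonzero eigenvalue λ₁ = 1 of the CIR diffusion; thus the CIR process attains the optimal convergence rate. -/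
open MeasureTheory Set

lemma gamma_moment (α : ℝ) (hα : -1 < α) (s : ℝ) (hs : 0 < s)
    (ρ : ℝ → ℝ)
    (hρ : ∀ x, ρ x = x ^ α * Real.exp (-x) / Real.Gamma (α + 1)) :
    (∫ x in Set.Ioi (0 : ℝ), x ^ s * ρ x) = Real.Gamma (α + s + 1) / Real.Gamma (α + 1) := by
  have h1 : ∀ x ∈ Set.Ioi (0 : ℝ),
      x ^ s * ρ x = Real.exp (-x) * x ^ (α + s + 1 - 1) / Real.Gamma (α + 1) := by
    intro x hx
    rw [hρ x]
    rw [show α + s + 1 - 1 = s + α by ring, Real.rpow_add hx]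
    ring
  rw [setIntegral_congr_fun measurableSet_Ioi h1]
  rw [integral_div, ← Real.Gamma_eq_integral (by linarith)]

/-- For the Gamma density `ρ(x) = xᵅ e^{-x} / Γ(α+1)` on `(0, ∞)`
(`α > -1`) with variance function `σ²(x)/2 = x` (the CIR process): the average variance is
`σ̂²/2 = ∫ x ρ = α+1`, the variance of `ρ` is `m₂ - m₁² = α+1`, and the ratio
`σ̂²/(2(m₂-m₁²)) = 1`, which equals the smallest nonzero eigenvalue `λ₁ = 1` of the CIR
diffusion, so the CIR process attains the optimal convergence rate. -/
theorem statement12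
    (α : ℝ) (hα : -1 < α)
    (ρ : ℝ → ℝ)
    (hρ : ∀ x, ρ x = x ^ α * Real.exp (-x) / Real.Gamma (α + 1)) :
    (∫ x in Set.Ioi (0 : ℝ), x * ρ x) = α + 1 ∧
    (∫ x in Set.Ioi (0 : ℝ), x ^ 2 * ρ x) - (∫ x in Set.Ioi (0 : ℝ), x * ρ x) ^ 2
        = α + 1 ∧
    (∫ x in Set.Ioi (0 : ℝ), x * ρ x) /
        ((∫ x in Set.Ioi (0 : ℝ), x ^ 2 * ρ x) - (∫ x in Set.Ioi (0 : ℝ), x * ρ x) ^ 2)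
        = 1 := by
  have hne1 : α + 1 ≠ 0 := by linarith
  have hne2 : α + 2 ≠ 0 := by linarith
  have hΓpos : 0 < Real.Gamma (α + 1) := Real.Gamma_pos_of_pos (by linarith)
  have h1 : (∫ x in Set.Ioi (0 : ℝ), x * ρ x) = α + 1 := by
    have := gamma_moment α hα 1 one_pos ρ hρ
    simp_rw [Real.rpow_one] at this
    rw [this, show α + 1 + 1 = (α + 1) + 1 by ring, Real.Gamma_add_one hne1]
    field_simp
  have h2 : (∫ x in Set.Ioi (0 : ℝ), x ^ 2 * ρ x) = (α + 2) * (α + 1) := by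
    have := gamma_moment α hα 2 two_pos ρ hρ
    simp_rw [show ∀ x : ℝ, x ^ (2:ℝ) = x ^ 2 from fun x => Real.rpow_two x] at this
    rw [this, show α + 2 + 1 = (α + 2) + 1 by ring, Real.Gamma_add_one hne2,
      show α + 2 = (α + 1) + 1 by ring, Real.Gamma_add_one hne1]
    field_simp
  refine ⟨h1, ?_, ?_⟩
  · rw [h1, h2]; ring
  · rw [h1, h2, show (α + 2) * (α + 1) - (α + 1) ^ 2 = α + 1 by ring]
    field_simp
end

section
/- Fix x₀ ∈ ℝ and s > 0, let π(x) = exp(−(x − x₀)²/(2s²))/√(2π s²) for x ∈ ℝ (the Normal density), and let the variance function be the constant σ²(x)/2 = s² (the Ornstein–Uhlenbeck process). Then the detailed-balance drift μ(x) = (1/(2π(x))) (d/dx)(σ²(x) π(x)) equals x₀ − x, the average variance is σ̂²/2 = s², the variance of π is m₂ − m₁² = s², and hence the ratio σ̂²/(2(m₂ − m₁²)) = 1, which equals the smallest nonzero eigenvalue λ₁ = 1 of the Ornstein–Uhlenbeck generator; thus the Ornstein–Uhlenbeck process attains the optimal convergence rate. -/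
/-!
`ρ` is `gaussianPDFReal x₀ s²`, the density of `gaussianReal x₀ s²`, so the integrals against `ρ`
are moments of the normal law: it has mass one and variance `s²`. The drift comes from the
logarithmic derivative `ρ'/ρ = -(x - x₀)/s²`.
-/

open MeasureTheory ProbabilityTheory NNReal

section Gaussian

variable {μ : ℝ} {v : ℝ≥0}

lemma integral_mul_gaussianPDFReal (hv : v ≠ 0) (f : ℝ → ℝ) :
    ∫ x, f x * gaussianPDFReal μ v x = ∫ x, f x ∂gaussianReal μ v := by
  simp only [integral_gaussianReal_eq_integral_smul hv, smul_eq_mul, mul_comm]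

lemma integral_sq_sub_sq_integral_gaussianReal :
    (∫ x, x ^ 2 ∂gaussianReal μ v) - (∫ x, x ∂gaussianReal μ v) ^ 2 = v := by
  have h := variance_eq_sub (memLp_id_gaussianReal (μ := μ) (v := v) 2)
  rw [variance_id_gaussianReal] at h
  exact h.symm

lemma hasDerivAt_gaussianPDFReal (x : ℝ) :
    HasDerivAt (gaussianPDFReal μ v) (-(x - μ) / v * gaussianPDFReal μ v x) x := by
  have hexponent : HasDerivAt (fun y => -(y - μ) ^ 2 / (2 * v)) (-(x - μ) / v) x := by
    refine (((hasDerivAt_id x).sub_const μ).pow 2).neg.div_const (2 * (v : ℝ)) |>.congr_deriv ?_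
    simp only [id]
    ring
  rw [gaussianPDFReal_def]
  exact (hexponent.exp.const_mul _).congr_deriv (by ring)

lemma drift_gaussianPDFReal (hv : v ≠ 0) (x : ℝ) :
    1 / (2 * gaussianPDFReal μ v x) * deriv (fun y => 2 * v * gaussianPDFReal μ v y) x
      = μ - x := by
  rw [((hasDerivAt_gaussianPDFReal x).const_mul _).deriv]
  have hρ := (gaussianPDFReal_pos μ v x hv).ne'
  have hv' : (v : ℝ) ≠ 0 := by exact_mod_cast hv
  field_simp
  ring

end Gaussian

/-- For the Normal density
`ρ(x) = exp(-(x-x₀)²/(2s²))/√(2πs²)` on `ℝ` with constant variance function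
`σ²(x)/2 = s²` (the Ornstein–Uhlenbeck process): the detailed-balance drift
`μ(x) = (1/(2ρ(x))) (d/dx)(σ²(x) ρ(x))` equals `x₀ - x`, the average variance is
`σ̂²/2 = s²`, the variance of `ρ` is `m₂ - m₁² = s²`, and the ratio
`σ̂²/(2(m₂-m₁²)) = 1`, which equals the smallest nonzero eigenvalue `λ₁ = 1` of the
Ornstein–Uhlenbeck generator, so the OU process attains the optimal convergence rate. -/
theorem statement13
    (x₀ s : ℝ) (hs : 0 < s)
    (ρ : ℝ → ℝ)
    (hρ : ∀ x, ρ x = Real.exp (-(x - x₀) ^ 2 / (2 * s ^ 2)) / Real.sqrt (2 * Real.pi * s ^ 2)) :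
    (∀ x : ℝ, 1 / (2 * ρ x) * deriv (fun y => 2 * s ^ 2 * ρ y) x = x₀ - x) ∧
    (∫ x : ℝ, s ^ 2 * ρ x) = s ^ 2 ∧
    (∫ x : ℝ, x ^ 2 * ρ x) - (∫ x : ℝ, x * ρ x) ^ 2 = s ^ 2 ∧
    (∫ x : ℝ, s ^ 2 * ρ x) / ((∫ x : ℝ, x ^ 2 * ρ x) - (∫ x : ℝ, x * ρ x) ^ 2) = 1 := by
  set v : ℝ≥0 := ⟨s ^ 2, sq_nonneg s⟩
  have hv : v ≠ 0 := by
    rw [ne_eq, ← NNReal.coe_eq_zero]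
    exact (pow_pos hs 2).ne'
  obtain rfl : ρ = gaussianPDFReal x₀ v := by
    ext x; rw [hρ, gaussianPDFReal, div_eq_inv_mul]; rfl
  have hmass : ∫ x, s ^ 2 * gaussianPDFReal x₀ v x = s ^ 2 := by
    rw [integral_const_mul, integral_gaussianPDFReal_eq_one x₀ hv, mul_one]
  have hvar : (∫ x, x ^ 2 * gaussianPDFReal x₀ v x) - (∫ x, x * gaussianPDFReal x₀ v x) ^ 2
      = s ^ 2 := by
    rw [integral_mul_gaussianPDFReal hv, integral_mul_gaussianPDFReal hv (fun x => x)]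
    exact integral_sq_sub_sq_integral_gaussianReal
  refine ⟨drift_gaussianPDFReal hv, hmass, hvar, ?_⟩
  rw [hmass, hvar, div_self (pow_pos hs 2).ne']
end

section
/- Fix α ≥ 2 and let π(x) = (1 + x²)^{−(α + 1/2)} / B(α, 1/2) for x ∈ ℝ (the Student-type density). Then π is a probability density (∫_ℝ (1 + x²)^{−(α+1/2)} dx = B(α, 1/2)), its first moment is m₁ = 0, its second moment is m₂ = 1/(2α − 2); for the variance function σ²(x)/2 = 1 + x² the average variance is σ̂²/2 = (2α − 1)/(2α − 2), and hence the ratio σ̂²/(2(m₂ − m₁²)) = 2α − 1, which equals the smallest nonzero discrete eigenvalue λ₁ = 1·(2α − 1) of the Student diffusion; thus the Student process attains the optimal convergence rate. -/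
/-!
The substitutions `x = √y` and `y = t / (1 - t)` turn `∫ (1 + x²)^(-s)` into the Beta integral
`B(1/2, s - 1/2)`, and `Γ(z + 1) = z Γ(z)` then gives the reduction
`∫ (1 + x²)^(-(s-1)) = (s - 1)/(s - 3/2) · ∫ (1 + x²)^(-s)`. Since `(1 + x²) π(x)` is, up to
the same normalisation, the weight with exponent lowered by one, this is the average variance
`(2α - 1)/(2α - 2)`; subtracting the total mass `1` gives `m₂`, and `m₁ = 0` by symmetry.
-/

open MeasureTheory Set

theorem integral_rpow_mul_one_sub_rpow {a b : ℝ} (ha : 0 < a) (hb : 0 < b) :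
    ∫ t in (0 : ℝ)..1, t ^ (a - 1) * (1 - t) ^ (b - 1) =
      Real.Gamma a * Real.Gamma b / Real.Gamma (a + b) := by
  have hcast : Complex.betaIntegral a b =
      ((∫ t in (0 : ℝ)..1, t ^ (a - 1) * (1 - t) ^ (b - 1) : ℝ) : ℂ) := by
    rw [Complex.betaIntegral, ← intervalIntegral.integral_ofReal]
    refine intervalIntegral.integral_congr fun t ht => ?_
    rw [uIcc_of_le zero_le_one] at ht
    push_cast
    rw [Complex.ofReal_cpow ht.1, Complex.ofReal_cpow (sub_nonneg.mpr ht.2)]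
    push_cast
    rfl
  have h := Complex.betaIntegral_eq_Gamma_mul_div a b (by simpa using ha) (by simpa using hb)
  rw [hcast, ← Complex.ofReal_add, Complex.Gamma_ofReal, Complex.Gamma_ofReal,
    Complex.Gamma_ofReal] at h
  exact_mod_cast h

theorem integral_Ioi_rpow_mul_one_add_rpow_neg {a b : ℝ} (ha : 0 < a) (hb : 0 < b) :
    ∫ y in Ioi (0 : ℝ), y ^ (a - 1) * (1 + y) ^ (-(a + b)) =
      Real.Gamma a * Real.Gamma b / Real.Gamma (a + b) := by
  have himage : (fun y : ℝ => y / (1 + y)) '' Ioi 0 = Ioo 0 1 := by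
    ext t
    refine ⟨?_, fun ht => ⟨t / (1 - t), div_pos ht.1 (sub_pos.mpr ht.2), ?_⟩⟩
    · rintro ⟨y, hy, rfl⟩
      have hy : (0 : ℝ) < y := hy
      exact ⟨by positivity, (div_lt_one (by positivity)).mpr (by linarith)⟩
    · have : 1 - t ≠ 0 := (sub_pos.mpr ht.2).ne'
      field_simp
      ring
  have hderiv : ∀ y ∈ Ioi (0 : ℝ),
      HasDerivWithinAt (fun y : ℝ => y / (1 + y)) (1 / (1 + y) ^ 2) (Ioi 0) y := by
    intro y hy
    have hy : (0 : ℝ) < 1 + y := by linarith [mem_Ioi.mp hy]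
    have h : HasDerivAt (fun y : ℝ => y / (1 + y)) ((1 * (1 + y) - y * 1) / (1 + y) ^ 2) y :=
      (hasDerivAt_id' y).div ((hasDerivAt_id' y).const_add 1) hy.ne'
    exact (h.congr_deriv (by ring)).hasDerivWithinAt
  have hinj : InjOn (fun y : ℝ => y / (1 + y)) (Ioi 0) := by
    intro y hy z hz hyz
    have hy : (0 : ℝ) < 1 + y := by linarith [mem_Ioi.mp hy]
    have hz : (0 : ℝ) < 1 + z := by linarith [mem_Ioi.mp hz]
    rw [div_eq_div_iff hy.ne' hz.ne'] at hyz
    linarith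
  rw [← integral_rpow_mul_one_sub_rpow ha hb, intervalIntegral.integral_of_le zero_le_one,
    integral_Ioc_eq_integral_Ioo, ← himage,
    integral_image_eq_integral_abs_deriv_smul measurableSet_Ioi hderiv hinj]
  refine setIntegral_congr_fun measurableSet_Ioi fun y hy => ?_
  have hy0 : (0 : ℝ) ≤ y := le_of_lt hy
  have hy1 : (0 : ℝ) < 1 + y := by linarith
  have hsub : 1 - y / (1 + y) = (1 + y)⁻¹ := by field_simp; ring
  rw [smul_eq_mul, hsub, Real.div_rpow hy0 hy1.le, Real.inv_rpow hy1.le, Real.rpow_neg hy1.le,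
    show a + b = (a - 1) + (b - 1) + 2 by ring, Real.rpow_add hy1, Real.rpow_add hy1,
    Real.rpow_two, abs_of_pos (by positivity)]
  have := Real.rpow_pos_of_pos hy1 (a - 1)
  have := Real.rpow_pos_of_pos hy1 (b - 1)
  field_simp

theorem integrable_one_add_sq_rpow_neg {s : ℝ} (hs : 1 / 2 < s) :
    Integrable fun x : ℝ => (1 + x ^ 2) ^ (-s) := by
  have h := integrable_rpow_neg_one_add_norm_sq (E := ℝ) (μ := volume) (r := 2 * s)
    (by rw [Module.finrank_self, Nat.cast_one]; linarith)
  simpa [Real.norm_eq_abs, sq_abs, neg_div] using h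

theorem integral_one_add_sq_rpow_neg {s : ℝ} (hs : 1 / 2 < s) :
    ∫ x : ℝ, (1 + x ^ 2) ^ (-s) =
      Real.Gamma (1 / 2) * Real.Gamma (s - 1 / 2) / Real.Gamma s := by
  have heven := integral_comp_abs (f := fun x : ℝ => (1 + x ^ 2) ^ (-s))
  simp only [sq_abs] at heven
  have hsubst := integral_comp_rpow_Ioi_of_pos (p := 2) two_pos
    (g := fun y : ℝ => y ^ ((1 : ℝ) / 2 - 1) * (1 + y) ^ (-(1 / 2 + (s - 1 / 2))))
  rw [integral_Ioi_rpow_mul_one_add_rpow_neg one_half_pos (by linarith),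
    add_sub_cancel] at hsubst
  rw [heven, ← hsubst, ← integral_const_mul]
  refine setIntegral_congr_fun measurableSet_Ioi fun x hx => ?_
  have hx : (0 : ℝ) < x := hx
  rw [smul_eq_mul, ← Real.rpow_mul hx.le, Real.rpow_two]
  norm_num [Real.rpow_neg_one]
  field_simp

theorem integral_one_add_sq_rpow_neg_sub_one {s : ℝ} (hs : 3 / 2 < s) :
    ∫ x : ℝ, (1 + x ^ 2) ^ (-(s - 1)) =
      (s - 1) / (s - 3 / 2) * ∫ x : ℝ, (1 + x ^ 2) ^ (-s) := by
  have hΓs : Real.Gamma s = (s - 1) * Real.Gamma (s - 1) := by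
    simpa using Real.Gamma_add_one (s := s - 1) (by linarith)
  have hΓs' : Real.Gamma (s - 1 / 2) = (s - 3 / 2) * Real.Gamma (s - 3 / 2) := by
    rw [← Real.Gamma_add_one (by linarith)]; ring_nf
  rw [integral_one_add_sq_rpow_neg (by linarith), integral_one_add_sq_rpow_neg (by linarith),
    hΓs, hΓs', show s - 1 - 1 / 2 = s - 3 / 2 by ring]
  have := Real.Gamma_pos_of_pos (show 0 < s - 1 by linarith)
  have : s - 1 ≠ 0 := by linarith
  have : 2 * s - 3 ≠ 0 := by linarith
  generalize Real.Gamma (s - 3 / 2) = g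
  field_simp

theorem one_add_sq_mul_one_add_sq_rpow_neg (x s : ℝ) :
    (1 + x ^ 2) * (1 + x ^ 2) ^ (-s) = (1 + x ^ 2) ^ (-(s - 1)) := by
  rw [show -(s - 1) = 1 + -s by ring, Real.rpow_add (by positivity), Real.rpow_one]

theorem integral_mul_eq_zero_of_even {f : ℝ → ℝ} (hf : ∀ x, f (-x) = f x) :
    ∫ x : ℝ, x * f x = 0 := by
  have h := integral_neg_eq_self (fun x : ℝ => x * f x) volume
  simp only [hf, neg_mul, integral_neg] at h
  linarith

/-- For the Student-type density
`ρ(x) = (1+x²)^{-(α+1/2)} / B(α, 1/2)` on `ℝ` (`α ≥ 2`): `ρ` is a probability density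
(`∫ (1+x²)^{-(α+1/2)} dx = B(α, 1/2)`), its first moment is `m₁ = 0`, its second moment is
`m₂ = 1/(2α-2)`; for the variance function `σ²(x)/2 = 1+x²` the average variance is
`σ̂²/2 = (2α-1)/(2α-2)`, and the ratio `σ̂²/(2(m₂-m₁²)) = 2α-1 = 1·(2α-1)`, the smallest
nonzero discrete eigenvalue of the Student diffusion, so the Student process attains the
optimal convergence rate. -/
theorem statement14
    (α : ℝ) (hα : 2 ≤ α)
    (B : ℝ → ℝ → ℝ)
    (hB : ∀ a b, B a b = Real.Gamma a * Real.Gamma b / Real.Gamma (a + b))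
    (ρ : ℝ → ℝ)
    (hρ : ∀ x, ρ x = (1 + x ^ 2) ^ (-(α + 1 / 2)) / B α (1 / 2)) :
    (∫ x : ℝ, (1 + x ^ 2) ^ (-(α + 1 / 2))) = B α (1 / 2) ∧
    (∫ x : ℝ, x * ρ x) = 0 ∧
    (∫ x : ℝ, x ^ 2 * ρ x) = 1 / (2 * α - 2) ∧
    (∫ x : ℝ, (1 + x ^ 2) * ρ x) = (2 * α - 1) / (2 * α - 2) ∧
    (∫ x : ℝ, (1 + x ^ 2) * ρ x) /
        ((∫ x : ℝ, x ^ 2 * ρ x) - (∫ x : ℝ, x * ρ x) ^ 2)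
      = 1 * (2 * α - 1) := by
  have hα₁ : α - 1 ≠ 0 := by linarith
  have hZ : ∫ x : ℝ, (1 + x ^ 2) ^ (-(α + 1 / 2)) = B α (1 / 2) := by
    rw [integral_one_add_sq_rpow_neg (by linarith), hB, add_sub_cancel_right, mul_comm]
  have hZpos : 0 < B α (1 / 2) := by
    rw [hB]; exact ProbabilityTheory.beta_pos (by linarith) one_half_pos
  have hweight (x : ℝ) :
      (1 + x ^ 2) * ρ x = (1 + x ^ 2) ^ (-(α + 1 / 2 - 1)) / B α (1 / 2) := by
    rw [hρ, mul_div_assoc', one_add_sq_mul_one_add_sq_rpow_neg]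
  have hmass : ∫ x : ℝ, ρ x = 1 := by
    simp_rw [hρ, integral_div, hZ, div_self hZpos.ne']
  have hσ : ∫ x : ℝ, (1 + x ^ 2) * ρ x = (2 * α - 1) / (2 * α - 2) := by
    simp_rw [hweight, integral_div,
      integral_one_add_sq_rpow_neg_sub_one (by linarith : 3 / 2 < α + 1 / 2), hZ,
      mul_div_assoc, div_self hZpos.ne', mul_one]
    rw [div_eq_div_iff (by linarith) (by linarith)]
    ring
  have hm₂ : ∫ x : ℝ, x ^ 2 * ρ x = 1 / (2 * α - 2) := by
    have hρ_int : Integrable ρ :=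
      ((integrable_one_add_sq_rpow_neg (by linarith)).div_const _).congr
        (ae_of_all _ fun x => (hρ x).symm)
    have hweight_int : Integrable fun x => (1 + x ^ 2) * ρ x :=
      ((integrable_one_add_sq_rpow_neg (by linarith)).div_const _).congr
        (ae_of_all _ fun x => (hweight x).symm)
    calc ∫ x : ℝ, x ^ 2 * ρ x = (∫ x : ℝ, (1 + x ^ 2) * ρ x) - ∫ x : ℝ, ρ x := by
          rw [← integral_sub hweight_int hρ_int]; congr with x; ring
      _ = 1 / (2 * α - 2) := by rw [hσ, hmass]; field_simp; ring
  have hm₁ : ∫ x : ℝ, x * ρ x = 0 := integral_mul_eq_zero_of_even fun x => by simp [hρ]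
  refine ⟨hZ, hm₁, hm₂, hσ, ?_⟩
  rw [hσ, hm₂, hm₁]
  field_simp
  ring
end

section
/- Fix α ≥ 2 and let π(x) = x^{−(2α+1)} e^{−1/x} / Γ(2α) for x ∈ (0, ∞) (the Inverse-Gamma density with shape 2α). Then its first moment is m₁ = 1/(2α − 1), its second moment is m₂ = 1/((2α − 1)(2α − 2)); for the variance function σ²(x)/2 = x² the average variance is σ̂²/2 = m₂ = 1/((2α − 1)(2α − 2)), the variance of π is m₂ − m₁² = 1/((2α − 1)²(2α − 2)), and hence the ratio σ̂²/(2(m₂ − m₁²)) = 2α − 1, which equals the smallest nonzero discrete eigenvalue λ₁ = 1·(2α − 1) of the Reciprocal Gamma diffusion; thus the Reciprocal Gamma process attains the optimal convergence rate. -/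
/-!
The substitution `x ↦ 1/x` turns `∫₀^∞ x^{-(s+1)} e^{-1/x} dx` into Euler's integral for `Γ(s)`,
so the `k`-th moment of the Inverse-Gamma density of shape `a` is `Γ(a - k) / Γ(a)`. The functional
equation `Γ(s + 1) = s Γ(s)` then gives `m₁ = 1/(2α - 1)` and `m₂ = 1/((2α - 1)(2α - 2))`, and the
remaining identities are algebra.
-/

open MeasureTheory Set

noncomputable section

theorem Real.Gamma_div_Gamma_add_one {s : ℝ} (hs : 0 < s) :
    Real.Gamma s / Real.Gamma (s + 1) = 1 / s := by
  rw [Real.Gamma_add_one hs.ne', div_mul_cancel_right₀ (Real.Gamma_pos_of_pos hs).ne', one_div]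

theorem Real.Gamma_div_Gamma_add_two {s : ℝ} (hs : 0 < s) :
    Real.Gamma s / Real.Gamma (s + 2) = 1 / ((s + 1) * s) := by
  rw [show s + 2 = (s + 1) + 1 by ring, Real.Gamma_add_one (by positivity), mul_comm,
    ← div_div, Real.Gamma_div_Gamma_add_one hs, div_div, mul_comm]

theorem integral_rpow_neg_mul_exp_neg_inv {s : ℝ} (hs : 0 < s) :
    ∫ x in Ioi (0 : ℝ), x ^ (-(s + 1)) * Real.exp (-1 / x) = Real.Gamma s := by
  rw [Real.Gamma_eq_integral hs,
    ← integral_comp_rpow_Ioi (fun y => Real.exp (-y) * y ^ (s - 1)) (p := -1) (by norm_num)]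
  refine setIntegral_congr_fun measurableSet_Ioi fun x (hx : 0 < x) => ?_
  rw [smul_eq_mul, Real.rpow_neg_one, Real.inv_rpow hx.le, ← Real.rpow_neg hx.le,
    abs_neg, abs_one, one_mul, mul_comm (Real.exp _), ← mul_assoc, ← Real.rpow_add hx,
    neg_div, one_div]
  ring_nf

namespace InverseGamma

def density (a x : ℝ) : ℝ :=
  x ^ (-(a + 1)) * Real.exp (-1 / x) / Real.Gamma a

theorem integral_pow_mul_density {a : ℝ} (k : ℕ) (hk : (k : ℝ) < a) :
    ∫ x in Ioi (0 : ℝ), x ^ k * density a x = Real.Gamma (a - k) / Real.Gamma a := by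
  have hshift : ∀ x ∈ Ioi (0 : ℝ), x ^ k * density a x
      = x ^ (-((a - k) + 1)) * Real.exp (-1 / x) / Real.Gamma a := by
    intro x (hx : 0 < x)
    rw [density, ← Real.rpow_natCast, mul_div_assoc', ← mul_assoc, ← Real.rpow_add hx]
    ring_nf
  rw [setIntegral_congr_fun measurableSet_Ioi hshift, integral_div,
    integral_rpow_neg_mul_exp_neg_inv (sub_pos.mpr hk)]

end InverseGamma

end

/-- For the Inverse-Gamma density (shape `2α`, `α ≥ 2`)
`ρ(x) = x^{-(2α+1)} e^{-1/x} / Γ(2α)` on `(0, ∞)`: its first moment is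
`m₁ = 1/(2α-1)`, its second moment is `m₂ = 1/((2α-1)(2α-2))`; for the variance function
`σ²(x)/2 = x²` the average variance is `σ̂²/2 = m₂`, the variance of `ρ` is
`m₂ - m₁² = 1/((2α-1)²(2α-2))`, and the ratio `σ̂²/(2(m₂-m₁²)) = 2α-1 = 1·(2α-1)`,
the smallest nonzero discrete eigenvalue of the Reciprocal Gamma diffusion, so the
Reciprocal Gamma process attains the optimal convergence rate. -/
theorem statement15
    (α : ℝ) (hα : 2 ≤ α)
    (ρ : ℝ → ℝ)
    (hρ : ∀ x, ρ x = x ^ (-(2 * α + 1)) * Real.exp (-1 / x) / Real.Gamma (2 * α)) :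
    (∫ x in Set.Ioi (0 : ℝ), x * ρ x) = 1 / (2 * α - 1) ∧
    (∫ x in Set.Ioi (0 : ℝ), x ^ 2 * ρ x) = 1 / ((2 * α - 1) * (2 * α - 2)) ∧
    (∫ x in Set.Ioi (0 : ℝ), x ^ 2 * ρ x) - (∫ x in Set.Ioi (0 : ℝ), x * ρ x) ^ 2
        = 1 / ((2 * α - 1) ^ 2 * (2 * α - 2)) ∧
    (∫ x in Set.Ioi (0 : ℝ), x ^ 2 * ρ x) /
        ((∫ x in Set.Ioi (0 : ℝ), x ^ 2 * ρ x) - (∫ x in Set.Ioi (0 : ℝ), x * ρ x) ^ 2)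
      = 1 * (2 * α - 1) := by
  obtain rfl : ρ = InverseGamma.density (2 * α) := funext hρ
  have h1 : 0 < 2 * α - 1 := by linarith
  have h2 : 0 < 2 * α - 2 := by linarith
  have h3 : α - 1 ≠ 0 := by linarith
  have hm₁ : ∫ x in Ioi (0 : ℝ), x * InverseGamma.density (2 * α) x = 1 / (2 * α - 1) := by
    have h := InverseGamma.integral_pow_mul_density (a := 2 * α) 1 (by norm_num; linarith)
    simp only [pow_one, Nat.cast_one] at h
    rw [h]
    simpa [show 2 * α - 1 + 1 = 2 * α by ring] using Real.Gamma_div_Gamma_add_one h1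
  have hm₂ : ∫ x in Ioi (0 : ℝ), x ^ 2 * InverseGamma.density (2 * α) x
      = 1 / ((2 * α - 1) * (2 * α - 2)) := by
    rw [InverseGamma.integral_pow_mul_density 2 (by push_cast; linarith)]
    simpa [show 2 * α - 2 + 1 = 2 * α - 1 by ring] using Real.Gamma_div_Gamma_add_two h2
  have hvar : 1 / ((2 * α - 1) * (2 * α - 2)) - (1 / (2 * α - 1)) ^ 2
      = 1 / ((2 * α - 1) ^ 2 * (2 * α - 2)) := by
    field_simp [h1.ne', h2.ne', h3]; ring
  refine ⟨hm₁, hm₂, ?_, ?_⟩ <;> rw [hm₁, hm₂, hvar]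
  field_simp [h1.ne', h2.ne', h3]
end

section
/- Fix α, β > 0 and a ∈ ℝ with |a| < 1. Then for every x ∈ (0, 1), (d/dx)[ x^α (1 − x)^β (1 − a x)^{−(α+β)} ] = ( α − (α + β(1 − a)) x ) · x^{α−1} (1 − x)^{β−1} (1 − a x)^{−(α+β+1)}. Consequently, a diffusion on (0, 1) whose stationary density is proportional to x^{α−1}(1 − x)^{β−1}(1 − a x)^{−(α+β+1)} and whose variance function is the degree-three polynomial σ²(x)/2 = x(1 − x)(1 − a x) satisfies the detailed balance equation with the affine drift μ(x) = α − (α + β(1 − a)) x, and hence is an optimal diffusion process. -/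
open Set

/-! The product rule gives the derivative of `yᵅ (1-y)^β (1-ay)^γ` as a quadratic polynomial times
`y^{α-1} (1-y)^{β-1} (1-ay)^{γ-1}`; for `γ = -(α+β)` the quadratic terms cancel and the polynomial
becomes the affine drift. Multiplying the density by `σ²/2 = y(1-y)(1-ay)` raises each exponent by
one, which turns the detailed balance equation into the same derivative. -/

lemma hasDerivAt_rpow_mul_one_sub_rpow_mul_one_sub_mul_rpow {α β γ a x : ℝ}
    (hx : x ≠ 0) (h1x : 1 - x ≠ 0) (hax : 1 - a * x ≠ 0) :
    HasDerivAt (fun y : ℝ => y ^ α * (1 - y) ^ β * (1 - a * y) ^ γ)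
      ((α * (1 - x) * (1 - a * x) - β * x * (1 - a * x) - a * γ * x * (1 - x)) *
        (x ^ (α - 1) * (1 - x) ^ (β - 1) * (1 - a * x) ^ (γ - 1))) x := by
  have hpow : HasDerivAt (fun y : ℝ => y ^ α) (α * x ^ (α - 1)) x :=
    Real.hasDerivAt_rpow_const (Or.inl hx)
  have hpow₁ : HasDerivAt (fun y : ℝ => (1 - y) ^ β) (-1 * β * (1 - x) ^ (β - 1)) x :=
    ((hasDerivAt_id x).const_sub 1).rpow_const (Or.inl h1x)
  have hpow₂ :
      HasDerivAt (fun y : ℝ => (1 - a * y) ^ γ) (-(a * 1) * γ * (1 - a * x) ^ (γ - 1)) x :=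
    (((hasDerivAt_id x).const_mul a).const_sub 1).rpow_const (Or.inl hax)
  refine ((hpow.mul hpow₁).mul hpow₂).congr_deriv ?_
  simp only [Pi.mul_apply, Real.rpow_sub_one hx, Real.rpow_sub_one h1x, Real.rpow_sub_one hax]
  generalize 1 - a * x = u at *
  field_simp
  ring

lemma mul_rpow_sub_one_mul_rpow_sub_one_mul_rpow_sub_one {α β γ a y : ℝ}
    (hy : y ≠ 0) (h1y : 1 - y ≠ 0) (hay : 1 - a * y ≠ 0) :
    y * (1 - y) * (1 - a * y) * (y ^ (α - 1) * (1 - y) ^ (β - 1) * (1 - a * y) ^ (γ - 1)) =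
      y ^ α * (1 - y) ^ β * (1 - a * y) ^ γ := by
  simp only [Real.rpow_sub_one hy, Real.rpow_sub_one h1y, Real.rpow_sub_one hay]
  generalize 1 - a * y = u at *
  field_simp

lemma one_sub_mul_pos_of_abs_lt_one {a x : ℝ} (ha : |a| < 1) (hx : x ∈ Ioo (0 : ℝ) 1) :
    0 < 1 - a * x := by
  obtain ⟨hx₀, hx₁⟩ := hx
  obtain ⟨ha₀, ha₁⟩ := abs_lt.mp ha
  nlinarith

lemma hasDerivAt_rpow_mul_rpow_mul_rpow_neg_add {α β a x : ℝ} (ha : |a| < 1)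
    (hx : x ∈ Ioo (0 : ℝ) 1) :
    HasDerivAt (fun y : ℝ => y ^ α * (1 - y) ^ β * (1 - a * y) ^ (-(α + β)))
      ((α - (α + β * (1 - a)) * x) *
        (x ^ (α - 1) * (1 - x) ^ (β - 1) * (1 - a * x) ^ (-(α + β + 1)))) x := by
  have hax := one_sub_mul_pos_of_abs_lt_one ha hx
  have h := hasDerivAt_rpow_mul_one_sub_rpow_mul_one_sub_mul_rpow (α := α) (β := β)
    (γ := -(α + β)) hx.1.ne' (sub_pos.mpr hx.2).ne' hax.ne'
  rw [show -(α + β) - 1 = -(α + β + 1) by ring] at h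
  exact h.congr_deriv (by ring)

theorem statement19_general
    (α β a : ℝ) (ha : |a| < 1) :
    (∀ x ∈ Set.Ioo (0 : ℝ) 1,
      HasDerivAt (fun y : ℝ => y ^ α * (1 - y) ^ β * (1 - a * y) ^ (-(α + β)))
        ((α - (α + β * (1 - a)) * x) *
          (x ^ (α - 1) * (1 - x) ^ (β - 1) * (1 - a * x) ^ (-(α + β + 1)))) x) ∧
    ∀ c : ℝ, 0 < c →
      ∀ x ∈ Set.Ioo (0 : ℝ) 1,
        HasDerivAt
          (fun y : ℝ => y * (1 - y) * (1 - a * y) *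
            (c * (y ^ (α - 1) * (1 - y) ^ (β - 1) * (1 - a * y) ^ (-(α + β + 1)))))
          ((α - (α + β * (1 - a)) * x) *
            (c * (x ^ (α - 1) * (1 - x) ^ (β - 1) * (1 - a * x) ^ (-(α + β + 1))))) x := by
  refine ⟨fun x hx => hasDerivAt_rpow_mul_rpow_mul_rpow_neg_add ha hx, fun c _ x hx => ?_⟩
  have hflux : HasDerivAt (fun y : ℝ => c * (y ^ α * (1 - y) ^ β * (1 - a * y) ^ (-(α + β))))
      ((α - (α + β * (1 - a)) * x) *
        (c * (x ^ (α - 1) * (1 - x) ^ (β - 1) * (1 - a * x) ^ (-(α + β + 1))))) x :=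
    ((hasDerivAt_rpow_mul_rpow_mul_rpow_neg_add ha hx).const_mul c).congr_deriv (by ring)
  refine hflux.congr_of_eventuallyEq <|
    Filter.eventually_of_mem (isOpen_Ioo.mem_nhds hx) fun y hy => ?_
  have h := mul_rpow_sub_one_mul_rpow_sub_one_mul_rpow_sub_one (α := α) (β := β)
    (γ := -(α + β)) hy.1.ne' (sub_pos.mpr hy.2).ne' (one_sub_mul_pos_of_abs_lt_one ha hy).ne'
  rw [show -(α + β) - 1 = -(α + β + 1) by ring] at h
  simp only [← h]
  ring

/-- For `α, β > 0` and `|a| < 1`, for every `x ∈ (0, 1)`,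
`(d/dx)[xᵅ(1-x)^β(1-ax)^{-(α+β)}] = (α - (α + β(1-a))x)·x^{α-1}(1-x)^{β-1}(1-ax)^{-(α+β+1)}`.
Consequently, a diffusion on `(0,1)` whose stationary density is proportional to
`x^{α-1}(1-x)^{β-1}(1-ax)^{-(α+β+1)}` and whose variance function is the degree-three
polynomial `σ²(x)/2 = x(1-x)(1-ax)` satisfies the detailed balance equation
`μ(x)ρ(x) = (d/dx)[(σ²(x)/2)ρ(x)]` with the affine drift
`μ(x) = α - (α + β(1-a))x`, and hence is an optimal diffusion process. -/
theorem statement19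
    (α β a : ℝ) (hα : 0 < α) (hβ : 0 < β) (ha : |a| < 1) :
    (∀ x ∈ Set.Ioo (0 : ℝ) 1,
      HasDerivAt (fun y : ℝ => y ^ α * (1 - y) ^ β * (1 - a * y) ^ (-(α + β)))
        ((α - (α + β * (1 - a)) * x) *
          (x ^ (α - 1) * (1 - x) ^ (β - 1) * (1 - a * x) ^ (-(α + β + 1)))) x) ∧
    ∀ c : ℝ, 0 < c →
      ∀ x ∈ Set.Ioo (0 : ℝ) 1,
        HasDerivAt
          (fun y : ℝ => y * (1 - y) * (1 - a * y) *
            (c * (y ^ (α - 1) * (1 - y) ^ (β - 1) * (1 - a * y) ^ (-(α + β + 1)))))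
          ((α - (α + β * (1 - a)) * x) *
            (c * (x ^ (α - 1) * (1 - x) ^ (β - 1) * (1 - a * x) ^ (-(α + β + 1))))) x :=
  statement19_general α β a ha
end
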